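/- Let A₁ ∈ ℝ^{m×k} with rank(A₁) = k, A₂ ∈ ℝ^{m×(n−k)}, and r ≥ k. Then the optimal value of the constrained low-rank approximation problem min{‖A₂ − B₂‖_F² : B₂ ∈ ℝ^{m×(n−k)}, rank(A₁ B₂) ≤ r} equals ‖P⊥_{A₁}(A₂) − H_{r−k}(P⊥_{A₁}(A₂))‖_F², i.e., the squared Frobenius error of the best rank-(r−k) approximation of P⊥_{A₁}(A₂). -/

import Mathlib

open Matrix

/-- Frobenius norm of a real matrix. -/
noncomputable def frobNorm {m n : ℕ} (A : Matrix (Fin m) (Fin n) ℝ) : ℝ :=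
  Real.sqrt (∑ i, ∑ j, (A i j) ^ 2)

/-- Column space of a matrix, as a subspace of Euclidean space. -/
noncomputable def colSpace {m k : ℕ} (A : Matrix (Fin m) (Fin k) ℝ) :
    Submodule ℝ (EuclideanSpace ℝ (Fin m)) :=
  LinearMap.range (Matrix.toEuclideanLin A)

/-- `P_{A₁}`: orthogonal projection onto the column space of `A₁`, applied columnwise. -/
noncomputable def projCols {m k l : ℕ} (A₁ : Matrix (Fin m) (Fin k) ℝ)
    (B : Matrix (Fin m) (Fin l) ℝ) : Matrix (Fin m) (Fin l) ℝ :=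
  Matrix.of fun i j =>
    (Submodule.orthogonalProjectionOnto (colSpace A₁) (WithLp.toLp 2 fun i' => B i' j) : EuclideanSpace ℝ (Fin m)) i

/-- `P⊥_{A₁}`: orthogonal projection onto the orthogonal complement of the column
space of `A₁`, applied columnwise. -/
noncomputable def projOrthCols {m k l : ℕ} (A₁ : Matrix (Fin m) (Fin k) ℝ)
    (B : Matrix (Fin m) (Fin l) ℝ) : Matrix (Fin m) (Fin l) ℝ :=
  Matrix.of fun i j =>
    (Submodule.orthogonalProjectionOnto (colSpace A₁)ᗮ (WithLp.toLp 2 fun i' => B i' j) : EuclideanSpace ℝ (Fin m)) i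

/-!
Splitting each column along `col(A₁)` and its orthogonal complement gives
`‖A₂ - B₂‖_F ≥ ‖P⊥A₂ - P⊥B₂‖_F`, and `rank (A₁ B₂) ≥ k + rank (P⊥B₂)` because `col(P⊥B₂)` lies in
`col(A₁ B₂)` and is orthogonal to `col(A₁)`. Hence the Eckart–Young bound for `P⊥A₂ = P D Qᵀ` at
rank `r - k` is a lower bound, and it is attained by `B₂ = P_{A₁}A₂ + H_{r-k}(P⊥A₂)`.

Eckart–Young reduces by orthogonal invariance to the diagonal `D`. If `rank B ≤ s`, choose an
orthonormal family `u₁, …, u_t` in `ker B` with `t ≥ l - s`. By Bessel's inequality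
`‖D - B‖² ≥ ∑ⱼ ‖D uⱼ‖² = ∑ₐ cₐ dₐ²` with weights `cₐ = ∑ⱼ uⱼ(a)² ∈ [0, 1]` summing to `t`, and
such a weighted sum is at least the sum of the `l - s` smallest `dₐ²`.
-/

open Finset

section Frobenius

variable {m n : ℕ}

lemma frobNorm_sq (A : Matrix (Fin m) (Fin n) ℝ) : frobNorm A ^ 2 = ∑ i, ∑ j, A i j ^ 2 :=
  Real.sq_sqrt (by positivity)

lemma frobNorm_sq_eq_sum_norm_row_sq (A : Matrix (Fin m) (Fin n) ℝ) :
    frobNorm A ^ 2 = ∑ i, ‖WithLp.toLp 2 (A i)‖ ^ 2 := by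
  simp [frobNorm_sq, EuclideanSpace.norm_sq_eq]

lemma frobNorm_transpose (A : Matrix (Fin m) (Fin n) ℝ) : frobNorm Aᵀ = frobNorm A := by
  rw [frobNorm, frobNorm, sum_comm]
  rfl

lemma frobNorm_sq_eq_sum_norm_col_sq (A : Matrix (Fin m) (Fin n) ℝ) :
    frobNorm A ^ 2 = ∑ j, ‖WithLp.toLp 2 (Aᵀ j)‖ ^ 2 := by
  rw [← frobNorm_transpose, frobNorm_sq_eq_sum_norm_row_sq]

lemma frobNorm_eq_sqrt_trace (A : Matrix (Fin m) (Fin n) ℝ) :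
    frobNorm A = Real.sqrt (Aᵀ * A).trace := by
  rw [frobNorm, sum_comm]
  simp [Matrix.trace, Matrix.mul_apply, sq]

lemma frobNorm_orthogonal_mul {U : Matrix (Fin m) (Fin m) ℝ}
    (hU : U ∈ orthogonalGroup (Fin m) ℝ) (X : Matrix (Fin m) (Fin n) ℝ) :
    frobNorm (U * X) = frobNorm X := by
  rw [frobNorm_eq_sqrt_trace, frobNorm_eq_sqrt_trace, Matrix.transpose_mul, Matrix.mul_assoc,
    ← Matrix.mul_assoc Uᵀ, (Matrix.mem_orthogonalGroup_iff' (Fin m) ℝ).mp hU, Matrix.one_mul]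

lemma frobNorm_mul_orthogonal {V : Matrix (Fin n) (Fin n) ℝ}
    (hV : V ∈ orthogonalGroup (Fin n) ℝ) (X : Matrix (Fin m) (Fin n) ℝ) :
    frobNorm (X * V) = frobNorm X := by
  rw [frobNorm_eq_sqrt_trace, frobNorm_eq_sqrt_trace, Matrix.transpose_mul, Matrix.mul_assoc,
    Matrix.trace_mul_comm, Matrix.mul_assoc, Matrix.mul_assoc X,
    (Matrix.mem_orthogonalGroup_iff (Fin n) ℝ).mp hV, Matrix.mul_one, Matrix.trace_mul_comm]

lemma frobNorm_orthogonal_mul_mul_transpose {P : Matrix (Fin m) (Fin m) ℝ}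
    {Q : Matrix (Fin n) (Fin n) ℝ} (hP : P ∈ orthogonalGroup (Fin m) ℝ)
    (hQ : Q ∈ orthogonalGroup (Fin n) ℝ) (X : Matrix (Fin m) (Fin n) ℝ) :
    frobNorm (P * X * Qᵀ) = frobNorm X := by
  have hQt : Qᵀ ∈ orthogonalGroup (Fin n) ℝ := by
    rw [Matrix.mem_orthogonalGroup_iff, Matrix.transpose_transpose]
    exact (Matrix.mem_orthogonalGroup_iff' (Fin n) ℝ).mp hQ
  rw [frobNorm_mul_orthogonal hQt, frobNorm_orthogonal_mul hP]

lemma sum_norm_toEuclideanLin_sq_le {ι : Type*} [Fintype ι] (M : Matrix (Fin m) (Fin n) ℝ)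
    {u : ι → EuclideanSpace ℝ (Fin n)} (hu : Orthonormal ℝ u) :
    ∑ j, ‖toEuclideanLin M (u j)‖ ^ 2 ≤ frobNorm M ^ 2 := by
  have hrow : ∀ j, ‖toEuclideanLin M (u j)‖ ^ 2 =
      ∑ i, ‖inner ℝ (u j) (WithLp.toLp 2 (M i))‖ ^ 2 := fun j => by
    simp [EuclideanSpace.norm_sq_eq, Matrix.mulVec, EuclideanSpace.inner_eq_star_dotProduct]
  rw [frobNorm_sq_eq_sum_norm_row_sq, sum_congr rfl fun j _ => hrow j, sum_comm]
  exact sum_le_sum fun i _ => hu.sum_inner_products_le _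

end Frobenius

lemma rank_mul_mul_le_middle {m n p q : ℕ} (A : Matrix (Fin m) (Fin n) ℝ)
    (X : Matrix (Fin n) (Fin p) ℝ) (B : Matrix (Fin p) (Fin q) ℝ) : (A * X * B).rank ≤ X.rank :=
  (Matrix.rank_mul_le_left _ _).trans (Matrix.rank_mul_le_right _ _)

section ColumnSpace

variable {m k l : ℕ}

lemma rank_eq_finrank_range_toEuclideanLin {n : Type*} [Fintype n] [DecidableEq n]
    (A : Matrix (Fin m) n ℝ) :
    A.rank = Module.finrank ℝ (LinearMap.range (toEuclideanLin A)) :=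
  Matrix.rank_eq_finrank_range_toLin A (PiLp.basisFun 2 ℝ _) (PiLp.basisFun 2 ℝ _)

lemma range_toEuclideanLin_eq_span {n : Type*} [Fintype n] [DecidableEq n]
    (A : Matrix (Fin m) n ℝ) :
    LinearMap.range (toEuclideanLin A) =
      Submodule.span ℝ (Set.range fun j => WithLp.toLp 2 (Aᵀ j)) := by
  apply le_antisymm
  · rintro _ ⟨x, rfl⟩
    have hx : toEuclideanLin A x = ∑ j, x j • WithLp.toLp 2 (Aᵀ j) := by
      ext i
      simp [Matrix.mulVec, dotProduct, mul_comm]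
    rw [hx]
    exact Submodule.sum_mem _ fun j _ => Submodule.smul_mem _ _ (Submodule.subset_span ⟨j, rfl⟩)
  · rw [Submodule.span_le, Set.range_subset_iff]
    intro j
    refine ⟨EuclideanSpace.single j 1, ?_⟩
    ext i
    simp [Matrix.mulVec, dotProduct, Pi.single_apply]

lemma rank_eq_finrank_colSpace (A : Matrix (Fin m) (Fin k) ℝ) :
    A.rank = Module.finrank ℝ (colSpace A) :=
  rank_eq_finrank_range_toEuclideanLin A

lemma colSpace_le_iff {A : Matrix (Fin m) (Fin k) ℝ} {K : Submodule ℝ (EuclideanSpace ℝ (Fin m))} :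
    colSpace A ≤ K ↔ ∀ j, WithLp.toLp 2 (Aᵀ j) ∈ K := by
  rw [colSpace, range_toEuclideanLin_eq_span, Submodule.span_le, Set.range_subset_iff]
  rfl

lemma toLp_col_mem_colSpace (A : Matrix (Fin m) (Fin k) ℝ) (j : Fin k) :
    WithLp.toLp 2 (Aᵀ j) ∈ colSpace A :=
  colSpace_le_iff.mp le_rfl j

lemma rank_fromCols_eq_finrank_sup (A : Matrix (Fin m) (Fin k) ℝ) (B : Matrix (Fin m) (Fin l) ℝ) :
    (fromCols A B).rank = Module.finrank ℝ (colSpace A ⊔ colSpace B :) := by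
  have hcols : (fun j => WithLp.toLp 2 ((fromCols A B)ᵀ j)) =
      Sum.elim (fun j => WithLp.toLp 2 (Aᵀ j)) (fun j => WithLp.toLp 2 (Bᵀ j)) := by
    funext j
    cases j <;> rfl
  rw [rank_eq_finrank_range_toEuclideanLin, range_toEuclideanLin_eq_span, hcols,
    Set.Sum.elim_range, Submodule.span_union, colSpace, colSpace, range_toEuclideanLin_eq_span,
    range_toEuclideanLin_eq_span]

end ColumnSpace

section Projection

variable {m k l : ℕ} (A : Matrix (Fin m) (Fin k) ℝ)

lemma toLp_col_projOrthCols (B : Matrix (Fin m) (Fin l) ℝ) (j : Fin l) :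
    WithLp.toLp 2 ((projOrthCols A B)ᵀ j) = (colSpace A)ᗮ.starProjection (WithLp.toLp 2 (Bᵀ j)) :=
  rfl

lemma projCols_add_projOrthCols (B : Matrix (Fin m) (Fin l) ℝ) :
    projCols A B + projOrthCols A B = B := by
  ext i j
  exact congrArg (· i) ((colSpace A).starProjection_add_starProjection_orthogonal _)

lemma projOrthCols_sub (B C : Matrix (Fin m) (Fin l) ℝ) :
    projOrthCols A (B - C) = projOrthCols A B - projOrthCols A C := by
  ext i j
  exact congrArg (· i)
    (map_sub (colSpace A)ᗮ.starProjection (WithLp.toLp 2 (Bᵀ j)) (WithLp.toLp 2 (Cᵀ j)))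

lemma frobNorm_projOrthCols_sq_le (B : Matrix (Fin m) (Fin l) ℝ) :
    frobNorm (projOrthCols A B) ^ 2 ≤ frobNorm B ^ 2 := by
  rw [frobNorm_sq_eq_sum_norm_col_sq, frobNorm_sq_eq_sum_norm_col_sq]
  gcongr with j _
  rw [toLp_col_projOrthCols]
  exact Submodule.norm_starProjection_apply_le _ _

lemma colSpace_projCols_le (B : Matrix (Fin m) (Fin l) ℝ) : colSpace (projCols A B) ≤ colSpace A :=
  colSpace_le_iff.mpr fun _ => (colSpace A).starProjection_apply_mem _

lemma colSpace_projOrthCols_le (B : Matrix (Fin m) (Fin l) ℝ) :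
    colSpace (projOrthCols A B) ≤ (colSpace A)ᗮ :=
  colSpace_le_iff.mpr fun _ => (colSpace A)ᗮ.starProjection_apply_mem _

lemma rank_fromCols_projCols_add_le (B M : Matrix (Fin m) (Fin l) ℝ) :
    (fromCols A (projCols A B + M)).rank ≤ A.rank + M.rank := by
  rw [rank_fromCols_eq_finrank_sup, rank_eq_finrank_colSpace A,
    rank_eq_finrank_colSpace M]
  have hle : colSpace A ⊔ colSpace (projCols A B + M) ≤ colSpace A ⊔ colSpace M := by
    refine sup_le le_sup_left (colSpace_le_iff.mpr fun j => ?_)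
    exact Submodule.add_mem_sup (colSpace_projCols_le A B (toLp_col_mem_colSpace _ j))
      (toLp_col_mem_colSpace M j)
  exact (Submodule.finrank_mono hle).trans (Submodule.finrank_add_le_finrank_add_finrank _ _)

lemma rank_add_rank_projOrthCols_le (B : Matrix (Fin m) (Fin l) ℝ) :
    A.rank + (projOrthCols A B).rank ≤ (fromCols A B).rank := by
  rw [rank_fromCols_eq_finrank_sup, rank_eq_finrank_colSpace A,
    rank_eq_finrank_colSpace (projOrthCols A B)]
  have hdisj : Disjoint (colSpace A) (colSpace (projOrthCols A B)) :=
    (colSpace A).orthogonal_disjoint.mono_right (colSpace_projOrthCols_le A B)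
  have hle : colSpace A ⊔ colSpace (projOrthCols A B) ≤ colSpace A ⊔ colSpace B := by
    refine sup_le le_sup_left (colSpace_le_iff.mpr fun j => ?_)
    have hcol : WithLp.toLp 2 ((projOrthCols A B)ᵀ j) =
        WithLp.toLp 2 (Bᵀ j) - WithLp.toLp 2 ((projCols A B)ᵀ j) :=
      eq_sub_of_add_eq' ((colSpace A).starProjection_add_starProjection_orthogonal _)
    rw [hcol]
    exact Submodule.sub_mem _ (Submodule.mem_sup_right (toLp_col_mem_colSpace B j))
      (Submodule.mem_sup_left (colSpace_projCols_le A B (toLp_col_mem_colSpace _ j)))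
  rw [← Submodule.finrank_sup_add_finrank_inf_eq, hdisj.eq_bot, finrank_bot, add_zero]
  exact Submodule.finrank_mono hle

end Projection

lemma sq_sum_eq_sum_sq_of_mul_eq_zero {ι : Type*} (s : Finset ι) (f : ι → ℝ)
    (h : ∀ a ∈ s, ∀ b ∈ s, a ≠ b → f a * f b = 0) :
    (∑ a ∈ s, f a) ^ 2 = ∑ a ∈ s, f a ^ 2 := by
  rw [sq, sum_mul_sum]
  refine sum_congr rfl fun a ha => ?_
  rw [sum_eq_single_of_mem a ha fun b hb hba => h a ha b hb hba.symm, sq]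

lemma sum_le_sum_mul_of_threshold {ι : Type*} [Fintype ι] (T : Finset ι) {v c : ι → ℝ} {θ : ℝ}
    (hθ : 0 ≤ θ) (hT : ∀ a ∈ T, v a ≤ θ) (hTc : ∀ a ∉ T, θ ≤ v a)
    (hc0 : ∀ a, 0 ≤ c a) (hc1 : ∀ a, c a ≤ 1) (hcard : (#T : ℝ) ≤ ∑ a, c a) :
    ∑ a ∈ T, v a ≤ ∑ a, c a * v a := by
  classical
  have hterm : ∀ a, (if a ∈ T then v a - θ else 0) ≤ c a * v a - c a * θ := by
    intro a
    split_ifs with ha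
    · nlinarith [hT a ha, hc1 a]
    · nlinarith [hTc a ha, hc0 a]
  have hsum := sum_le_sum fun a (_ : a ∈ univ) => hterm a
  rw [← Finset.sum_filter, Finset.filter_mem_eq_inter, univ_inter, sum_sub_distrib, sum_const,
    nsmul_eq_mul, sum_sub_distrib, ← sum_mul] at hsum
  nlinarith [mul_le_mul_of_nonneg_right hcard hθ]

lemma sum_tail_le_sum_mul_of_antitone {l : ℕ} (s : ℕ) {w c : Fin l → ℝ} (hw : Antitone w)
    (hw0 : ∀ a, 0 ≤ w a) (hc0 : ∀ a, 0 ≤ c a) (hc1 : ∀ a, c a ≤ 1)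
    (hcard : ((l - s : ℕ) : ℝ) ≤ ∑ a, c a) :
    ∑ a : Fin l with s ≤ a.val, w a ≤ ∑ a, c a * w a := by
  by_cases hs : s < l
  · refine sum_le_sum_mul_of_threshold _ (hw0 ⟨s, hs⟩) (fun a ha => hw ?_)
      (fun a ha => hw ?_) hc0 hc1 (le_trans ?_ hcard)
    · simpa [Fin.le_def] using ha
    · simp only [mem_filter, mem_univ, true_and, not_le] at ha
      exact Fin.le_def.mpr ha.le
    · have h := Finset.card_filter_add_card_filter_not (s := univ) (fun a : Fin l => (a : ℕ) < s)
      simp only [not_lt, Fin.card_filter_val_lt, card_univ, Fintype.card_fin] at h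
      exact_mod_cast (by omega : #{a : Fin l | s ≤ (a : ℕ)} ≤ l - s)
  · rw [Finset.sum_eq_zero fun a ha => absurd (a.2.trans_le (not_lt.mp hs)) ?_]
    · exact sum_nonneg fun a _ => mul_nonneg (hc0 a) (hw0 a)
    · simp only [mem_filter, mem_univ, true_and] at ha
      omega

lemma exists_orthonormal_ker {m l : ℕ} (B : Matrix (Fin m) (Fin l) ℝ) :
    ∃ u : Fin (l - B.rank) → EuclideanSpace ℝ (Fin l),
      Orthonormal ℝ u ∧ ∀ j, toEuclideanLin B (u j) = 0 := by
  have hK : Module.finrank ℝ (LinearMap.ker (toEuclideanLin B)) = l - B.rank := by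
    have h := LinearMap.finrank_range_add_finrank_ker (toEuclideanLin B)
    rw [finrank_euclideanSpace_fin, ← rank_eq_finrank_range_toEuclideanLin] at h
    omega
  let b := (stdOrthonormalBasis ℝ (LinearMap.ker (toEuclideanLin B))).reindex (finCongr hK)
  exact ⟨fun j => b j, b.orthonormal.comp_linearIsometry (LinearMap.ker _).subtypeₗᵢ,
    fun j => (b j).2⟩

section Orthonormal

variable {ι : Type*} [Fintype ι] {l : ℕ} {u : ι → EuclideanSpace ℝ (Fin l)}

lemma Orthonormal.sum_sq_apply_le_one (hu : Orthonormal ℝ u) (a : Fin l) :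
    ∑ j, u j a ^ 2 ≤ 1 := by
  simpa [EuclideanSpace.inner_single_right] using
    hu.sum_inner_products_le (EuclideanSpace.single a (1 : ℝ)) (s := univ)

lemma Orthonormal.sum_sum_sq_apply (hu : Orthonormal ℝ u) :
    ∑ a, ∑ j, u j a ^ 2 = Fintype.card ι := by
  rw [sum_comm]
  simp [← EuclideanSpace.real_norm_sq_eq, hu.1]

end Orthonormal

-- For the diagonal factor `D` of an SVD `P * D * Qᵀ`, `P * truncRows s D * Qᵀ` is
-- `H_s (P * D * Qᵀ)`.
def truncRows {m l : ℕ} (s : ℕ) (D : Matrix (Fin m) (Fin l) ℝ) : Matrix (Fin m) (Fin l) ℝ :=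
  Matrix.of fun i j => if (i : ℕ) < s then D i j else 0

lemma rank_truncRows_le {m l : ℕ} (s : ℕ) (D : Matrix (Fin m) (Fin l) ℝ) :
    (truncRows s D).rank ≤ s := by
  refine (Matrix.rank_le_card_of_support_subset _ ({i | i.val < s} : Finset (Fin m))
    fun i hi => ?_).trans ?_
  · by_contra hs
    simp only [coe_filter, mem_univ, true_and] at hs
    exact hi (funext fun j => if_neg hs)
  · rw [Fin.card_filter_val_lt]
    exact min_le_right _ _

def IsRectDiagonal {m l : ℕ} (D : Matrix (Fin m) (Fin l) ℝ) : Prop :=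
  ∀ (i : Fin m) (j : Fin l), (i : ℕ) ≠ (j : ℕ) → D i j = 0

structure IsSingularValueMatrix {m l : ℕ} (D : Matrix (Fin m) (Fin l) ℝ) : Prop where
  isRectDiagonal : IsRectDiagonal D
  nonneg : ∀ (i : Fin m) (j : Fin l), 0 ≤ D i j
  diag_antitone : ∀ (i i' : Fin m) (j j' : Fin l),
    (i : ℕ) = (j : ℕ) → (i' : ℕ) = (j' : ℕ) → (i : ℕ) ≤ (i' : ℕ) → D i' j' ≤ D i j

section Diagonal

variable {m l : ℕ} {D : Matrix (Fin m) (Fin l) ℝ}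

lemma IsRectDiagonal.norm_toEuclideanLin_sq (hD : IsRectDiagonal D)
    (u : EuclideanSpace ℝ (Fin l)) :
    ‖toEuclideanLin D u‖ ^ 2 = ∑ a, (∑ i, D i a ^ 2) * u a ^ 2 := by
  have hrow : ∀ i, (D *ᵥ u.ofLp) i ^ 2 = ∑ a, D i a ^ 2 * u a ^ 2 := by
    intro i
    rw [Matrix.mulVec, dotProduct, sq_sum_eq_sum_sq_of_mul_eq_zero]
    · simp only [mul_pow]
    · intro a _ b _ hab
      by_cases hia : (i : ℕ) = a
      · rw [hD i b (fun hib => hab (Fin.ext (hia.symm.trans hib)))]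
        ring
      · rw [hD i a hia]
        ring
  simp [EuclideanSpace.norm_sq_eq, hrow, sum_mul]
  exact sum_comm

lemma IsRectDiagonal.frobNorm_sub_truncRows_sq (hD : IsRectDiagonal D) (s : ℕ) :
    frobNorm (D - truncRows s D) ^ 2 = ∑ a : Fin l with s ≤ a.val, ∑ i, D i a ^ 2 := by
  have hentry : ∀ i a, (D - truncRows s D) i a ^ 2 = if s ≤ (a : ℕ) then D i a ^ 2 else 0 := by
    intro i a
    by_cases hia : (i : ℕ) = a
    · by_cases hs : s ≤ (a : ℕ)
      · simp [truncRows, hs, hia, not_lt.mpr hs]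
      · simp [truncRows, hs, hia, not_le.mp hs]
    · simp [truncRows, hD i a hia]
  rw [frobNorm_sq, sum_comm, sum_filter]
  simp only [hentry, sum_ite_irrel, sum_const_zero]

lemma IsRectDiagonal.sum_sq_col (hD : IsRectDiagonal D) (a : Fin l) :
    ∑ i, D i a ^ 2 = if h : (a : ℕ) < m then D ⟨a, h⟩ a ^ 2 else 0 := by
  split_ifs with h
  · refine sum_eq_single _ (fun i _ hi => ?_) (by simp)
    rw [hD i a fun hia => hi (Fin.ext hia), sq, zero_mul]
  · exact sum_eq_zero fun i _ => by rw [hD i a (by omega), sq, zero_mul]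

lemma IsSingularValueMatrix.antitone_sum_sq_col (hD : IsSingularValueMatrix D) :
    Antitone fun a => ∑ i, D i a ^ 2 := by
  intro a a' haa'
  simp only [hD.isRectDiagonal.sum_sq_col]
  split_ifs with h' h
  · exact pow_le_pow_left₀ (hD.nonneg _ _) (hD.diag_antitone _ _ _ _ rfl rfl haa') 2
  · exact absurd (lt_of_le_of_lt (Fin.le_def.mp haa') h') h
  · positivity
  · rfl

theorem IsSingularValueMatrix.frobNorm_sub_truncRows_sq_le (hD : IsSingularValueMatrix D) (s : ℕ)
    {B : Matrix (Fin m) (Fin l) ℝ} (hB : B.rank ≤ s) :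
    frobNorm (D - truncRows s D) ^ 2 ≤ frobNorm (D - B) ^ 2 := by
  obtain ⟨u, hu, hker⟩ := exists_orthonormal_ker B
  have hcard : ((l - s : ℕ) : ℝ) ≤ ∑ a, ∑ j, u j a ^ 2 := by
    rw [hu.sum_sum_sq_apply, Fintype.card_fin]
    exact_mod_cast Nat.sub_le_sub_left hB l
  calc frobNorm (D - truncRows s D) ^ 2 = ∑ a : Fin l with s ≤ a.val, ∑ i, D i a ^ 2 :=
        hD.isRectDiagonal.frobNorm_sub_truncRows_sq s
    _ ≤ ∑ a, (∑ j, u j a ^ 2) * ∑ i, D i a ^ 2 :=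
        sum_tail_le_sum_mul_of_antitone s hD.antitone_sum_sq_col
          (fun _ => by positivity) (fun _ => by positivity) hu.sum_sq_apply_le_one hcard
    _ = ∑ j, ∑ a, (∑ i, D i a ^ 2) * u j a ^ 2 := by
        rw [sum_comm]
        exact sum_congr rfl fun a _ => by rw [sum_mul]; exact sum_congr rfl fun j _ => mul_comm _ _
    _ = ∑ j, ‖toEuclideanLin D (u j)‖ ^ 2 := by
        simp only [hD.isRectDiagonal.norm_toEuclideanLin_sq]
    _ = ∑ j, ‖toEuclideanLin (D - B) (u j)‖ ^ 2 := by
        simp [hker]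
    _ ≤ frobNorm (D - B) ^ 2 := sum_norm_toEuclideanLin_sq_le _ hu

theorem IsSingularValueMatrix.frobNorm_svd_sub_truncRows_sq_le (hD : IsSingularValueMatrix D)
    (s : ℕ) {P : Matrix (Fin m) (Fin m) ℝ} {Q : Matrix (Fin l) (Fin l) ℝ}
    (hP : P ∈ orthogonalGroup (Fin m) ℝ) (hQ : Q ∈ orthogonalGroup (Fin l) ℝ)
    {W : Matrix (Fin m) (Fin l) ℝ} (hW : W.rank ≤ s) :
    frobNorm (P * D * Qᵀ - P * truncRows s D * Qᵀ) ^ 2 ≤ frobNorm (P * D * Qᵀ - W) ^ 2 := by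
  have hW' : P * (Pᵀ * W * Q) * Qᵀ = W := by
    rw [← Matrix.mul_assoc, ← Matrix.mul_assoc, (Matrix.mem_orthogonalGroup_iff (Fin m) ℝ).mp hP,
      Matrix.one_mul, Matrix.mul_assoc, (Matrix.mem_orthogonalGroup_iff (Fin l) ℝ).mp hQ,
      Matrix.mul_one]
  have hrank : (Pᵀ * W * Q).rank ≤ s := (rank_mul_mul_le_middle _ _ _).trans hW
  conv_rhs => rw [← hW']
  simp only [← Matrix.mul_sub, ← Matrix.sub_mul, frobNorm_orthogonal_mul_mul_transpose hP hQ]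
  exact hD.frobNorm_sub_truncRows_sq_le s hrank

end Diagonal

/-- The optimal value of the constrained low-rank approximation problem
`min {‖A₂ − B₂‖_F² : rank (A₁ B₂) ≤ r}` equals the squared Frobenius error
`‖P⊥_{A₁}(A₂) − H_{r−k}(P⊥_{A₁}(A₂))‖_F²` of the best rank-`(r−k)` approximation of the
projected residual; here `H_{r−k}` is computed from an SVD `P⊥_{A₁}(A₂) = P D Qᵀ`.
Moreover the optimal value is attained (it is the least element of the value set). -/
theorem ghs_optimal_value
    (m k l r : ℕ) (hkr : k ≤ r)
    (A₁ : Matrix (Fin m) (Fin k) ℝ) (A₂ : Matrix (Fin m) (Fin l) ℝ)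
    (hA₁ : A₁.rank = k)
    (P : Matrix (Fin m) (Fin m) ℝ) (Q : Matrix (Fin l) (Fin l) ℝ)
    (D : Matrix (Fin m) (Fin l) ℝ)
    (hP : P ∈ Matrix.orthogonalGroup (Fin m) ℝ)
    (hQ : Q ∈ Matrix.orthogonalGroup (Fin l) ℝ)
    (hDdiag : ∀ (i : Fin m) (j : Fin l), (i : ℕ) ≠ (j : ℕ) → D i j = 0)
    (hDnonneg : ∀ (i : Fin m) (j : Fin l), 0 ≤ D i j)
    (hDmono : ∀ (i i' : Fin m) (j j' : Fin l),
      (i : ℕ) = (j : ℕ) → (i' : ℕ) = (j' : ℕ) → (i : ℕ) ≤ (i' : ℕ) → D i' j' ≤ D i j)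
    (hSVD : projOrthCols A₁ A₂ = P * D * Qᵀ) :
    IsLeast
      { x : ℝ | ∃ B₂ : Matrix (Fin m) (Fin l) ℝ,
          (Matrix.fromCols A₁ B₂).rank ≤ r ∧ x = (frobNorm (A₂ - B₂)) ^ 2 }
      ((frobNorm (projOrthCols A₁ A₂ -
        P * (Matrix.of fun (i : Fin m) (j : Fin l) => if (i : ℕ) < r - k then D i j else 0)
          * Qᵀ)) ^ 2) := by
  change IsLeast _ (frobNorm (projOrthCols A₁ A₂ - P * truncRows (r - k) D * Qᵀ) ^ 2)
  set H := P * truncRows (r - k) D * Qᵀ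
  refine ⟨⟨projCols A₁ A₂ + H, ?_, ?_⟩, ?_⟩
  · have hH : H.rank ≤ r - k := (rank_mul_mul_le_middle _ _ _).trans (rank_truncRows_le _ D)
    have := rank_fromCols_projCols_add_le A₁ A₂ H
    omega
  · rw [eq_sub_of_add_eq' (projCols_add_projOrthCols A₁ A₂), sub_sub]
  · rintro _ ⟨B₂, hB₂, rfl⟩
    have hD : IsSingularValueMatrix D := ⟨hDdiag, hDnonneg, hDmono⟩
    have hW : (projOrthCols A₁ B₂).rank ≤ r - k := by
      have := rank_add_rank_projOrthCols_le A₁ B₂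
      omega
    calc frobNorm (projOrthCols A₁ A₂ - H) ^ 2
        ≤ frobNorm (projOrthCols A₁ A₂ - projOrthCols A₁ B₂) ^ 2 := by
          rw [hSVD]
          exact hD.frobNorm_svd_sub_truncRows_sq_le _ hP hQ hW
      _ = frobNorm (projOrthCols A₁ (A₂ - B₂)) ^ 2 := by rw [projOrthCols_sub]
      _ ≤ frobNorm (A₂ - B₂) ^ 2 := frobNorm_projOrthCols_sq_le _ _
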